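/- arXiv:2409.08161 — 2 statements merged into one kernel-verified Lean document; each statement's English description precedes it below -/
import Mathlib

section
/- With N = 3f+1 total votes at a given height cast by a set NG of at least N-f nodes for branch B, any node collecting N-f votes of that height sees at least f+1 votes for branch B, which strictly exceeds the number f of votes it could see for any other single branch from nodes outside NG. -/
open Finset

theorem Finset.card_add_card_le_card_inter_add_card {α : Type*} [Fintype α] [DecidableEq α]
    (s t : Finset α) : #s + #t ≤ #(s ∩ t) + Fintype.card α := by
  rw [← card_union_add_card_inter, add_comm]
  exact Nat.add_le_add_left (card_le_univ _) _

theorem stmt_1 (N f : ℕ) (hN : N = 3 * f + 1)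
    (NG S : Finset (Fin N))
    (hNG : N - f ≤ NG.card) (hS : S.card = N - f) :
    f + 1 ≤ (S ∩ NG).card ∧ (S \ NG).card ≤ f := by
  have hquorum := card_add_card_le_card_inter_add_card S NG
  rw [Fintype.card_fin] at hquorum
  have hsplit := card_sdiff_add_card_inter S NG
  omega
end

section
/- Strong validity with m ≥ 2 input values in an asynchronous system requires f ≤ ⌊(N-1)/(m+1)⌋: if f > ⌊(N-1)/(m+1)⌋ then N ≤ f(m+1), i.e., it is possible to partition the N-f honest nodes among m values so that no value is held by more than f honest nodes. -/
theorem stmt_2 (N f m : ℕ) (hm : 2 ≤ m) (hNf : N ≤ f * (m + 1)) :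
    ∃ assign : Fin (N - f) → Fin m,
      ∀ v : Fin m, (Finset.univ.filter (fun i => assign i = v)).card ≤ f := by
  have hm0 : 0 < m := by omega
  refine ⟨fun i => ⟨i.val % m, Nat.mod_lt _ hm0⟩, fun v => ?_⟩
  have := Finset.card_le_card_of_injOn (f := fun i : Fin (N - f) => i.val / m)
    (s := Finset.univ.filter (fun i => (⟨i.val % m, Nat.mod_lt _ hm0⟩ : Fin m) = v))
    (t := Finset.range f)
    (by
      intro i hi
      simp only [Finset.mem_coe, Finset.mem_filter] at hi
      have h1 : i.val < N - f := i.isLt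
      have hfm : f * (m + 1) = f * m + f := by ring
      have h2 : i.val < f * m := by omega
      simp only [Finset.mem_coe, Finset.mem_range]
      exact (Nat.div_lt_iff_lt_mul hm0).mpr h2)
    (by
      intro i hi j hj hij
      simp only [Finset.mem_filter, Finset.mem_coe] at hi hj
      have hmod : i.val % m = j.val % m := by
        have := hi.2
        have := hj.2
        have h1 : i.val % m = v.val := congrArg Fin.val hi.2
        have h2 : j.val % m = v.val := congrArg Fin.val hj.2
        omega
      apply Fin.ext
      simp only at hij
      calc i.val = m * (i.val / m) + i.val % m := (Nat.div_add_mod _ _).symm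
        _ = m * (j.val / m) + j.val % m := by rw [hij, hmod]
        _ = j.val := Nat.div_add_mod _ _)
  simpa using this
end
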